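/- arXiv:1703.09280 — 2 statements merged into one kernel-verified Lean document; each statement's English description precedes it below -/
import Mathlib

section
/- Let ε > 0 and let f̂ < 0 have nonempty level set X̂ = { x | f(x) = f̂ }. Run the Radial Subgradient Method with step sizes α_i = ε/(2‖ζ_i‖²), assuming ζ_i ≠ 0 at each iteration. Then some iteration i ≤ ⌈(4/3)·(dist(0, X̂)²/R²)·(1/ε²)⌉ either has γ_{z_i}(x̃_{i+1}) = 0 (certifying f is unbounded below along the ray { t·x̃_{i+1} | t > 0 }) or satisfies (f(x_i) − f̂)/(0 − f̂) ≤ ε. -/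
open Filter

/-- The perspective function `f^p(x, γ) = γ · f(x/γ)` of `f`, for `γ > 0`. -/
noncomputable def perspective {n : ℕ} (f : EuclideanSpace ℝ (Fin n) → EReal)
    (x : EuclideanSpace ℝ (Fin n)) (γ : ℝ) : EReal :=
  (γ : EReal) * f (γ⁻¹ • x)

/-- The radial reformulation of `f` of level `z`:
`γ_z(x) = inf { γ > 0 | f^p(x, γ) ≤ z }`. -/
noncomputable def radial {n : ℕ} (f : EuclideanSpace ℝ (Fin n) → EReal)
    (z : ℝ) (x : EuclideanSpace ℝ (Fin n)) : ℝ :=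
  sInf {γ : ℝ | 0 < γ ∧ perspective f x γ ≤ (z : EReal)}

/-- `f : ℝⁿ → ℝ ∪ {∞}` is lower-semicontinuous and convex, never `-∞`, with
`0` in the interior of its effective domain and `f(0) < 0`. -/
structure GoodFun {n : ℕ} (f : EuclideanSpace ℝ (Fin n) → EReal) : Prop where
  proper : ∀ x, f x ≠ ⊥
  lsc : LowerSemicontinuous f
  convexEpi : Convex ℝ {p : EuclideanSpace ℝ (Fin n) × ℝ | f p.1 ≤ (p.2 : EReal)}
  zero_mem : (0 : EuclideanSpace ℝ (Fin n)) ∈ interior {x | f x ≠ ⊤}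
  neg_at_zero : f 0 < 0

/-- `ζ` is a subgradient of `g` at `x`. -/
def IsSubgradient {n : ℕ} (g : EuclideanSpace ℝ (Fin n) → ℝ)
    (x ζ : EuclideanSpace ℝ (Fin n)) : Prop :=
  ∀ y, g x + (inner ℝ ζ (y - x) : ℝ) ≤ g y

/-- The Radial Subgradient Method with positive step sizes `α`:
`x 0 = 0`, `z 0 = f 0`; at iteration `i`, `ζ i` is a subgradient of `γ_{z i}` at `x i`,
`xt (i+1) = x i - α i • ζ i`, and whenever `γ_{z i}(xt (i+1)) > 0`,
`(x (i+1), z (i+1)) = (xt (i+1), z i) / γ_{z i}(xt (i+1))`. -/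
structure RSM {n : ℕ} (f : EuclideanSpace ℝ (Fin n) → EReal) (α : ℕ → ℝ)
    (x xt : ℕ → EuclideanSpace ℝ (Fin n)) (z : ℕ → ℝ)
    (ζ : ℕ → EuclideanSpace ℝ (Fin n)) : Prop where
  step_pos : ∀ i, 0 < α i
  init_x : x 0 = 0
  init_z : f 0 = ((z 0 : ℝ) : EReal)
  subgrad : ∀ i, IsSubgradient (radial f (z i)) (x i) (ζ i)
  tilde : ∀ i, xt (i + 1) = x i - α i • ζ i
  update_x : ∀ i, 0 < radial f (z i) (xt (i + 1)) →
    x (i + 1) = (radial f (z i) (xt (i + 1)))⁻¹ • xt (i + 1)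
  update_z : ∀ i, 0 < radial f (z i) (xt (i + 1)) →
    z (i + 1) = z i / radial f (z i) (xt (i + 1))

/-!
Divide the iterates by their levels: the points `(z i)⁻¹ • x i` then approach `fhat⁻¹ • y` for
every `y ∈ X̂`. The gauge `γ_{z i}` is convex, equals `1` at `x i`, is at most `z i / fhat` at
`(z i / fhat) • y`, and is bounded by `z i / f 0 + ‖·‖ / R`, so its subgradients have norm at most
`1 / R`. Hence, while the relative gap at `x i` exceeds `ε`, the step `ε / (2‖ζ i‖²)` decreases
`‖(z i)⁻¹ • x i - fhat⁻¹ • y‖²` by at least `(3/4) ε² R² / fhat²`. Starting from `‖y‖² / fhat²`,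
this happens fewer than `(4/3) ‖y‖² / (ε² R²)` times.
-/

open Topology

section Radial

variable {n : ℕ} {f : EuclideanSpace ℝ (Fin n) → EReal}

theorem perspective_le_coe_iff {x : EuclideanSpace ℝ (Fin n)} {γ : ℝ} (hγ : 0 < γ)
    (z : ℝ) : perspective f x γ ≤ (z : EReal) ↔ f (γ⁻¹ • x) ≤ ((z / γ : ℝ) : EReal) := by
  rw [EReal.coe_div, EReal.le_div_iff_mul_le (by exact_mod_cast hγ) (EReal.coe_ne_top _),
    mul_comm, perspective]

theorem radial_nonneg (z : ℝ) (x : EuclideanSpace ℝ (Fin n)) : 0 ≤ radial f z x :=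
  Real.sInf_nonneg fun _ hγ => hγ.1.le

theorem radial_le {z γ : ℝ} {x : EuclideanSpace ℝ (Fin n)} (hγ : 0 < γ)
    (h : perspective f x γ ≤ (z : EReal)) : radial f z x ≤ γ :=
  csInf_le ⟨0, fun _ hγ => hγ.1.le⟩ ⟨hγ, h⟩

open scoped Pointwise in
theorem radial_div_inv_smul {c : ℝ} (hc : 0 < c) (z : ℝ) (x : EuclideanSpace ℝ (Fin n)) :
    radial f (z / c) (c⁻¹ • x) = c⁻¹ * radial f z x := by
  have hset : {γ : ℝ | 0 < γ ∧ perspective f (c⁻¹ • x) γ ≤ ((z / c : ℝ) : EReal)}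
      = c⁻¹ • {γ : ℝ | 0 < γ ∧ perspective f x γ ≤ (z : EReal)} := by
    ext γ
    rw [Set.mem_smul_set_iff_inv_smul_mem₀ (inv_ne_zero hc.ne'), inv_inv, smul_eq_mul]
    simp only [Set.mem_ofPred_eq, mul_pos_iff_of_pos_left hc]
    refine and_congr_right fun hγ => ?_
    rw [perspective_le_coe_iff hγ, perspective_le_coe_iff (by positivity), smul_smul, ← mul_inv,
      mul_comm γ c, div_div]
  rw [radial, radial, hset, Real.sInf_smul_of_nonneg (by positivity), smul_eq_mul]

theorem radial_zero_eq_one {z : ℝ} (h₀ : f 0 = z) (hz : z < 0) : radial f z 0 = 1 := by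
  have hset : {γ : ℝ | 0 < γ ∧ perspective f 0 γ ≤ (z : EReal)} = Set.Ici 1 := by
    ext γ
    simp only [Set.mem_ofPred_eq, Set.mem_Ici, perspective, smul_zero, h₀, ← EReal.coe_mul,
      EReal.coe_le_coe_iff]
    constructor
    · rintro ⟨hγ, h⟩
      nlinarith
    · intro h
      exact ⟨by linarith, by nlinarith⟩
  rw [radial, hset, csInf_Ici]

theorem radial_div_smul_le {z w : ℝ} {y : EuclideanSpace ℝ (Fin n)} (hy : f y ≤ w)
    (hw : w < 0) (hz : z < 0) : radial f z ((z / w) • y) ≤ z / w := by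
  have hq : 0 < z / w := div_pos_of_neg_of_neg hz hw
  refine radial_le hq ((perspective_le_coe_iff hq z).2 ?_)
  rwa [inv_smul_smul₀ hq.ne', div_div_cancel₀ hz.ne]

theorem LowerSemicontinuous.le_of_radial_eq_one (hf : LowerSemicontinuous f) {z : ℝ}
    {x : EuclideanSpace ℝ (Fin n)} (h : radial f z x = 1) : f x ≤ z := by
  set S := {γ : ℝ | 0 < γ ∧ perspective f x γ ≤ (z : EReal)}
  -- `sInf ∅ = 0` in `ℝ`, so `radial f z x = 1` already forces `S` to be nonempty.
  have hS : S.Nonempty := Set.nonempty_iff_ne_empty.2 fun hS => by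
    simp [radial, S, hS] at h
  have h1 : (1 : ℝ) ∈ closure S := h ▸ csInf_mem_closure hS ⟨0, fun _ hγ => hγ.1.le⟩
  set φ : ℝ → EuclideanSpace ℝ (Fin n) × EReal := fun γ => (γ⁻¹ • x, ((z / γ : ℝ) : EReal))
  have hφ : ContinuousAt φ 1 := by
    refine ((continuousAt_inv₀ one_ne_zero).smul continuousAt_const).prodMk ?_
    exact continuous_coe_real_ereal.continuousAt.comp
      (continuousAt_const.div continuousAt_id one_ne_zero)
  have hφS : φ '' S ⊆ {p | f p.1 ≤ p.2} := by
    rintro _ ⟨γ, ⟨hγ, hp⟩, rfl⟩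
    exact (perspective_le_coe_iff hγ z).1 hp
  simpa [φ] using closure_minimal hφS hf.isClosed_epigraph (mem_closure_image hφ h1)

end Radial

namespace GoodFun

variable {n : ℕ} {f : EuclideanSpace ℝ (Fin n) → EReal} (hf : GoodFun f)
include hf

theorem apply_combo_le {a b : EuclideanSpace ℝ (Fin n)} {A B θ β : ℝ}
    (ha : f a ≤ A) (hb : f b ≤ B) (hθ : 0 ≤ θ) (hβ : 0 ≤ β) (hθβ : θ + β = 1) :
    f (θ • a + β • b) ≤ ((θ * A + β * B : ℝ) : EReal) :=
  hf.convexEpi (x := (a, A)) ha (y := (b, B)) hb hθ hβ hθβ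

theorem convexOn_toReal : ConvexOn ℝ (interior {x | f x ≠ ⊤}) fun x => (f x).toReal := by
  have hfin : ∀ {x}, f x ≠ ⊤ → f x = ((f x).toReal : EReal) := fun hx =>
    (EReal.coe_toReal hx (hf.proper _)).symm
  have hdom : Convex ℝ {x | f x ≠ ⊤} := fun a ha b hb θ β hθ hβ hθβ =>
    ne_top_of_le_ne_top (EReal.coe_ne_top _)
      (hf.apply_combo_le (hfin ha).le (hfin hb).le hθ hβ hθβ)
  refine ⟨hdom.interior, fun a ha b hb θ β hθ hβ hθβ => ?_⟩
  have h := hf.apply_combo_le (hfin (interior_subset ha)).le (hfin (interior_subset hb)).le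
    hθ hβ hθβ
  exact (EReal.toReal_le_toReal h (hf.proper _) (EReal.coe_ne_top _)).trans_eq
    (EReal.toReal_coe _)

theorem pos_of_isLUB {R : ℝ} (hR : IsLUB {r : ℝ | ∀ x, ‖x‖ ≤ r → f x ≤ 0} R) :
    0 < R := by
  have h₀ : (0 : EuclideanSpace ℝ (Fin n)) ∈ interior {x | f x ≠ ⊤} := hf.zero_mem
  have hcont : ContinuousAt (fun x => (f x).toReal) 0 :=
    (hf.convexOn_toReal.continuousOn isOpen_interior).continuousAt
      (isOpen_interior.mem_nhds h₀)
  have hev : ∀ᶠ x in 𝓝 0, (f x).toReal < 0 ∧ x ∈ interior {x | f x ≠ ⊤} :=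
    (hcont.eventually_lt_const (EReal.toReal_neg hf.neg_at_zero (hf.proper 0))).and
      (isOpen_interior.mem_nhds h₀)
  obtain ⟨δ, hδ, hball⟩ := Metric.eventually_nhds_iff.1 hev
  refine (half_pos hδ).trans_le (hR.1 fun x hx => ?_)
  obtain ⟨hx, hdom⟩ := hball (by rw [dist_zero_right]; linarith)
  rw [← EReal.coe_toReal (interior_subset hdom) (hf.proper x)]
  exact_mod_cast hx.le

theorem le_zero_of_norm_le {R : ℝ} (hR : IsLUB {r : ℝ | ∀ x, ‖x‖ ≤ r → f x ≤ 0} R)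
    {w : EuclideanSpace ℝ (Fin n)} (hw : ‖w‖ ≤ R) : f w ≤ 0 := by
  have hball : Metric.ball 0 R ⊆ f ⁻¹' Set.Iic 0 := fun x hx => by
    obtain ⟨r, hr, hxr, -⟩ := hR.exists_between (mem_ball_zero_iff.1 hx)
    exact hr x hxr.le
  have hclosed := closure_minimal hball (hf.lsc.isClosed_preimage 0)
  rw [closure_ball 0 (hf.pos_of_isLUB hR).ne'] at hclosed
  exact hclosed (mem_closedBall_zero_iff.2 hw)

/-- The witness `γ = z / z₀ + t` works because `γ⁻¹ • t • w` is the convex combination of `w`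
and `0` with weights `t / γ` and `(z / z₀) / γ`. -/
theorem radial_smul_le {z z₀ t : ℝ} {w : EuclideanSpace ℝ (Fin n)} (h₀ : f 0 ≤ z₀)
    (hz₀ : z₀ < 0) (hw : f w ≤ 0) (hz : z < 0) (ht : 0 ≤ t) :
    radial f z (t • w) ≤ z / z₀ + t := by
  have hq : 0 < z / z₀ := div_pos_of_neg_of_neg hz hz₀
  have hγ : 0 < z / z₀ + t := by positivity
  refine radial_le hγ ((perspective_le_coe_iff hγ z).2 ?_)
  have h := hf.apply_combo_le hw h₀ (θ := t / (z / z₀ + t)) (β := z / z₀ / (z / z₀ + t))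
    (by positivity) (by positivity) (by field_simp; ring)
  convert h using 2
  · rw [smul_zero, add_zero, smul_smul, inv_mul_eq_div]
  · field_simp
    simp [hz₀.ne]

theorem radial_le_affine {R z z₀ : ℝ} (hR : IsLUB {r : ℝ | ∀ x, ‖x‖ ≤ r → f x ≤ 0} R)
    (h₀ : f 0 ≤ z₀) (hz₀ : z₀ < 0) (hz : z < 0) (y : EuclideanSpace ℝ (Fin n)) :
    radial f z y ≤ z / z₀ + R⁻¹ * ‖y‖ := by
  have hR₀ := hf.pos_of_isLUB hR
  rcases eq_or_ne y 0 with rfl | hy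
  · have h0 := hf.le_zero_of_norm_le hR (w := 0) (by simpa using hR₀.le)
    simpa using hf.radial_smul_le h₀ hz₀ h0 hz le_rfl
  set w := (R / ‖y‖) • y
  have hw : ‖w‖ = R := by
    rw [norm_smul, Real.norm_eq_abs, abs_of_pos (by positivity),
      div_mul_cancel₀ _ (norm_ne_zero_iff.2 hy)]
  have hyw : (R⁻¹ * ‖y‖) • w = y := by
    rw [smul_smul]
    field_simp
    simp
  calc radial f z y = radial f z ((R⁻¹ * ‖y‖) • w) := by rw [hyw]
    _ ≤ z / z₀ + R⁻¹ * ‖y‖ :=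
      hf.radial_smul_le h₀ hz₀ (hf.le_zero_of_norm_le hR hw.le) hz (by positivity)

end GoodFun

namespace IsSubgradient

variable {n : ℕ} {g : EuclideanSpace ℝ (Fin n) → ℝ} {x ζ : EuclideanSpace ℝ (Fin n)}

theorem norm_le_of_le_affine (hg : IsSubgradient g x ζ) {C L : ℝ} (hL : 0 ≤ L)
    (hb : ∀ y, g y ≤ C + L * ‖y‖) : ‖ζ‖ ≤ L := by
  by_contra! hlt
  set M := C + L * ‖x‖ - g x
  have hgrowth : ∀ t : ℝ, 0 < t → t * (‖ζ‖ * (‖ζ‖ - L)) ≤ M := by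
    intro t ht
    have hsub := hg (x + t • ζ)
    rw [add_sub_cancel_left, real_inner_smul_right, real_inner_self_eq_norm_sq] at hsub
    have hnorm : ‖x + t • ζ‖ ≤ ‖x‖ + t * ‖ζ‖ :=
      (norm_add_le _ _).trans_eq (by rw [norm_smul, Real.norm_of_nonneg ht.le])
    nlinarith [hb (x + t • ζ), mul_le_mul_of_nonneg_left hnorm hL]
  have ha : 0 < ‖ζ‖ * (‖ζ‖ - L) := mul_pos (hL.trans_lt hlt) (sub_pos.2 hlt)
  have h := hgrowth ((|M| + 1) / (‖ζ‖ * (‖ζ‖ - L))) (by positivity)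
  rw [div_mul_cancel₀ _ ha.ne'] at h
  linarith [le_abs_self M]

theorem norm_sub_step_sq_le (hg : IsSubgradient g x ζ) (hζ : ζ ≠ 0) {ε : ℝ} (hε : 0 ≤ ε)
    {p : EuclideanSpace ℝ (Fin n)} (hp : g p + ε ≤ g x) :
    ‖x - (ε / (2 * ‖ζ‖ ^ 2)) • ζ - p‖ ^ 2 ≤ ‖x - p‖ ^ 2 - 3 / 4 * ε ^ 2 / ‖ζ‖ ^ 2 := by
  have hinner : ε ≤ inner ℝ ζ (x - p) := by
    have h := hg p
    rw [← neg_sub, inner_neg_right] at h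
    linarith
  have hζ₀ : 0 < ‖ζ‖ := norm_pos_iff.2 hζ
  set c := ε / (2 * ‖ζ‖ ^ 2)
  calc ‖x - c • ζ - p‖ ^ 2
      = ‖x - p‖ ^ 2 - 2 * c * inner ℝ ζ (x - p) + c ^ 2 * ‖ζ‖ ^ 2 := by
        rw [sub_right_comm, norm_sub_sq_real, real_inner_smul_right, norm_smul, mul_pow,
          Real.norm_eq_abs, sq_abs, real_inner_comm]
        ring
    _ ≤ ‖x - p‖ ^ 2 - 2 * c * ε + c ^ 2 * ‖ζ‖ ^ 2 := by gcongr
    _ = ‖x - p‖ ^ 2 - 3 / 4 * ε ^ 2 / ‖ζ‖ ^ 2 := by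
        simp only [c]
        field_simp
        ring

end IsSubgradient

namespace RSM

variable {n : ℕ} {f : EuclideanSpace ℝ (Fin n) → EReal} {α : ℕ → ℝ}
  {x xt : ℕ → EuclideanSpace ℝ (Fin n)} {z : ℕ → ℝ}
  {ζ : ℕ → EuclideanSpace ℝ (Fin n)} (h : RSM f α x xt z ζ)
include h

theorem z_zero_neg (hf : GoodFun f) : z 0 < 0 :=
  EReal.coe_lt_coe_iff.1 (h.init_z ▸ hf.neg_at_zero)

theorem radial_succ {i : ℕ} (hc : 0 < radial f (z i) (xt (i + 1))) :
    radial f (z (i + 1)) (x (i + 1)) = 1 := by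
  rw [h.update_z i hc, h.update_x i hc, radial_div_inv_smul hc, inv_mul_cancel₀ hc.ne']

theorem inv_smul_succ {i : ℕ} (hc : 0 < radial f (z i) (xt (i + 1))) :
    (z (i + 1))⁻¹ • x (i + 1) = (z i)⁻¹ • xt (i + 1) := by
  rw [h.update_z i hc, h.update_x i hc, smul_smul]
  congr 1
  field_simp

theorem neg_and_radial_eq_one (hf : GoodFun f) {i : ℕ}
    (hc : ∀ j < i, 0 < radial f (z j) (xt (j + 1))) :
    z i < 0 ∧ radial f (z i) (x i) = 1 := by
  induction i with
  | zero => exact ⟨h.z_zero_neg hf, h.init_x ▸ radial_zero_eq_one h.init_z (h.z_zero_neg hf)⟩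
  | succ i ih =>
    have hci := hc i i.lt_succ_self
    refine ⟨?_, h.radial_succ hci⟩
    rw [h.update_z i hci]
    exact div_neg_of_neg_of_pos (ih fun j hj => hc j (hj.trans i.lt_succ_self)).1 hci

theorem norm_subgrad_le (hf : GoodFun f) {R : ℝ}
    (hR : IsLUB {r : ℝ | ∀ x, ‖x‖ ≤ r → f x ≤ 0} R) {i : ℕ} (hzi : z i < 0) :
    ‖ζ i‖ ≤ R⁻¹ :=
  (h.subgrad i).norm_le_of_le_affine (inv_nonneg.2 (hf.pos_of_isLUB hR).le)
    (hf.radial_le_affine hR h.init_z.le (h.z_zero_neg hf) hzi)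

theorem sq_dist_succ_le (hf : GoodFun f) {R : ℝ}
    (hR : IsLUB {r : ℝ | ∀ x, ‖x‖ ≤ r → f x ≤ 0} R) {ε fhat : ℝ}
    {y : EuclideanSpace ℝ (Fin n)} (hy : f y ≤ fhat) (hfhat : fhat < 0) (hε : 0 ≤ ε)
    {i : ℕ} (hα : α i = ε / (2 * ‖ζ i‖ ^ 2)) (hζ : ζ i ≠ 0) (hzi : z i < 0)
    (hxi : radial f (z i) (x i) = 1) (hgap : z i / fhat + ε ≤ 1)
    (hc : 0 < radial f (z i) (xt (i + 1))) :
    ‖(z (i + 1))⁻¹ • x (i + 1) - fhat⁻¹ • y‖ ^ 2 ≤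
      ‖(z i)⁻¹ • x i - fhat⁻¹ • y‖ ^ 2 - 3 / 4 * ε ^ 2 * R ^ 2 / fhat ^ 2 := by
  set q := z i / fhat
  have hp : radial f (z i) (q • y) + ε ≤ radial f (z i) (x i) := by
    rw [hxi]
    linarith [radial_div_smul_le hy hfhat hzi]
  have hhom : ∀ v, (z i)⁻¹ • v - fhat⁻¹ • y = (z i)⁻¹ • (v - q • y) := fun v => by
    rw [smul_sub, smul_smul, inv_mul_eq_div, div_div_cancel_left' hzi.ne]
  have hnorm : ∀ v : EuclideanSpace ℝ (Fin n), ‖(z i)⁻¹ • v‖ ^ 2 = ‖v‖ ^ 2 / z i ^ 2 :=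
    fun v => by rw [norm_smul, mul_pow, Real.norm_eq_abs, sq_abs, inv_pow, inv_mul_eq_div]
  have hζ₀ : 0 < ‖ζ i‖ := norm_pos_iff.2 hζ
  have hζR := h.norm_subgrad_le hf hR hzi
  have hz2 : z i ^ 2 ≤ fhat ^ 2 := by
    have : fhat ≤ z i := by
      have := (div_le_one_of_neg hfhat).1 (by linarith : q ≤ 1)
      linarith
    nlinarith
  have hdecr : 3 / 4 * ε ^ 2 * R ^ 2 / fhat ^ 2 ≤ 3 / 4 * ε ^ 2 / ‖ζ i‖ ^ 2 / z i ^ 2 := by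
    have hR₀ := hf.pos_of_isLUB hR
    have : 0 < ‖ζ i‖ ^ 2 * z i ^ 2 := mul_pos (pow_pos hζ₀ 2) (sq_pos_of_neg hzi)
    rw [div_div]
    calc 3 / 4 * ε ^ 2 * R ^ 2 / fhat ^ 2 = 3 / 4 * ε ^ 2 / (R⁻¹ ^ 2 * fhat ^ 2) := by
          field_simp
      _ ≤ 3 / 4 * ε ^ 2 / (‖ζ i‖ ^ 2 * z i ^ 2) := by gcongr
  rw [h.inv_smul_succ hc, h.tilde, hα, hhom, hhom, hnorm, hnorm]
  calc ‖x i - (ε / (2 * ‖ζ i‖ ^ 2)) • ζ i - q • y‖ ^ 2 / z i ^ 2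
      ≤ (‖x i - q • y‖ ^ 2 - 3 / 4 * ε ^ 2 / ‖ζ i‖ ^ 2) / z i ^ 2 := by
        gcongr
        exact (h.subgrad i).norm_sub_step_sq_le hζ hε hp
    _ ≤ ‖x i - q • y‖ ^ 2 / z i ^ 2 - 3 / 4 * ε ^ 2 * R ^ 2 / fhat ^ 2 := by
        rw [sub_div]
        linarith

theorem mul_le_sq_norm_of_not_converged (hf : GoodFun f) {R : ℝ}
    (hR : IsLUB {r : ℝ | ∀ x, ‖x‖ ≤ r → f x ≤ 0} R) {ε fhat : ℝ}
    {y : EuclideanSpace ℝ (Fin n)} (hy : f y = fhat) (hfhat : fhat < 0) (hε : 0 < ε)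
    (hα : ∀ i, α i = ε / (2 * ‖ζ i‖ ^ 2)) (hζ : ∀ i, ζ i ≠ 0) {N : ℕ}
    (hbad : ∀ i < N, radial f (z i) (xt (i + 1)) ≠ 0 ∧
      ∀ v : ℝ, f (x i) = v → ε < (v - fhat) / (0 - fhat)) :
    N * (3 / 4 * ε ^ 2 * R ^ 2) ≤ ‖y‖ ^ 2 := by
  have hc : ∀ i < N, 0 < radial f (z i) (xt (i + 1)) := fun i hi =>
    (radial_nonneg _ _).lt_of_ne' (hbad i hi).1
  have hdist : ∀ i ≤ N, ‖(z i)⁻¹ • x i - fhat⁻¹ • y‖ ^ 2 ≤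
      ‖fhat⁻¹ • y‖ ^ 2 - i * (3 / 4 * ε ^ 2 * R ^ 2 / fhat ^ 2) := by
    intro i hi
    induction i with
    | zero => simp [h.init_x]
    | succ i ih =>
      have hiN : i < N := hi
      obtain ⟨hzi, hxi⟩ := h.neg_and_radial_eq_one hf fun j hj => hc j (hj.trans hiN)
      have hgap : z i / fhat + ε ≤ 1 := by
        have hfx := hf.lsc.le_of_radial_eq_one hxi
        have hfin : f (x i) = ((f (x i)).toReal : EReal) :=
          (EReal.coe_toReal (ne_top_of_le_ne_top (EReal.coe_ne_top _) hfx) (hf.proper _)).symm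
        have hv := (lt_div_iff₀ (by linarith)).1 ((hbad i hiN).2 _ hfin)
        rw [hfin, EReal.coe_le_coe_iff] at hfx
        rw [← le_sub_iff_add_le, div_le_iff_of_neg hfhat]
        linarith
      have hstep :=
        h.sq_dist_succ_le hf hR hy.le hfhat hε.le (hα i) (hζ i) hzi hxi hgap (hc i hiN)
      push_cast
      linarith [ih hiN.le]
  have hy2 : ‖fhat⁻¹ • y‖ ^ 2 = ‖y‖ ^ 2 / fhat ^ 2 := by
    rw [norm_smul, mul_pow, Real.norm_eq_abs, sq_abs, inv_pow, inv_mul_eq_div]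
  have hN : N * (3 / 4 * ε ^ 2 * R ^ 2) / fhat ^ 2 ≤ ‖y‖ ^ 2 / fhat ^ 2 := by
    rw [mul_div_assoc, ← hy2]
    linarith [hdist N le_rfl, sq_nonneg ‖(z N)⁻¹ • x N - fhat⁻¹ • y‖]
  exact (div_le_div_iff_of_pos_right (sq_pos_of_neg hfhat)).1 hN

end RSM

/-- **Theorem 1.3.** With step sizes `α i = ε/(2‖ζ i‖²)`, some iteration
`i ≤ ⌈(4/3)·(dist(0,X̂)²/R²)·(1/ε²)⌉` either has `γ_{z i}(x̃_{i+1}) = 0` or satisfies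
`(f(x i) - f̂)/(0 - f̂) ≤ ε`. -/
theorem radial_subgradient_convergence_optimal_unknown {n : ℕ}
    (f : EuclideanSpace ℝ (Fin n) → EReal) (hf : GoodFun f)
    (R : ℝ) (hR : IsLUB {r : ℝ | ∀ x, ‖x‖ ≤ r → f x ≤ 0} R)
    (ε : ℝ) (hε : 0 < ε)
    (fhat : ℝ) (hfhat : fhat < 0)
    (hXhat : {y : EuclideanSpace ℝ (Fin n) | f y = ((fhat : ℝ) : EReal)}.Nonempty)
    (α : ℕ → ℝ) (x xt : ℕ → EuclideanSpace ℝ (Fin n)) (z : ℕ → ℝ)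
    (ζ : ℕ → EuclideanSpace ℝ (Fin n)) (hrsm : RSM f α x xt z ζ)
    (hζne : ∀ i, ζ i ≠ 0)
    (hα : ∀ i, α i = ε / (2 * ‖ζ i‖ ^ 2)) :
    ∃ i ≤ ⌈(4 / 3 : ℝ) *
        (Metric.infDist (0 : EuclideanSpace ℝ (Fin n))
            {y | f y = ((fhat : ℝ) : EReal)} ^ 2 / R ^ 2) * (1 / ε ^ 2)⌉₊,
      radial f (z i) (xt (i + 1)) = 0 ∨
        ∃ v : ℝ, f (x i) = ((v : ℝ) : EReal) ∧ (v - fhat) / (0 - fhat) ≤ ε := by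
  set D := Metric.infDist (0 : EuclideanSpace ℝ (Fin n)) {y | f y = ((fhat : ℝ) : EReal)}
  set N := ⌈(4 / 3 : ℝ) * (D ^ 2 / R ^ 2) * (1 / ε ^ 2)⌉₊
  by_contra! hbad
  have hR₀ := hf.pos_of_isLUB hR
  have hD : ((N : ℝ) + 1) * (3 / 4 * ε ^ 2 * R ^ 2) ≤ D ^ 2 := by
    have hsqrt : √(((N : ℝ) + 1) * (3 / 4 * ε ^ 2 * R ^ 2)) ≤ D :=
      (Metric.le_infDist hXhat).2 fun y hy => by
        rw [dist_zero_left, Real.sqrt_le_left (norm_nonneg y)]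
        exact_mod_cast hrsm.mul_le_sq_norm_of_not_converged hf hR hy hfhat hε hα hζne
          (N := N + 1) fun i hi => hbad i (Nat.lt_succ_iff.1 hi)
    exact (Real.sqrt_le_left Metric.infDist_nonneg).1 hsqrt
  have hk : 0 < 3 / 4 * ε ^ 2 * R ^ 2 := by positivity
  have hN : D ^ 2 / (3 / 4 * ε ^ 2 * R ^ 2) ≤ N := by
    have hB : D ^ 2 / (3 / 4 * ε ^ 2 * R ^ 2) = 4 / 3 * (D ^ 2 / R ^ 2) * (1 / ε ^ 2) := by
      field_simp
    exact hB ▸ Nat.le_ceil _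
  rw [div_le_iff₀ hk] at hN
  linarith
end

section
/- For any x ∈ ℝⁿ and any z ∈ ℝ, γ_z(x) = 1 − λ(x, 1, z), where λ(x, s, t) = inf { λ ∈ ℝ | (x, s, t) − λ·(0, 1, 0) ∉ 𝒦 } and 𝒦 ⊆ ℝⁿ × ℝ × ℝ is the closure of { (x·s, s, t·s) | s > 0, (x, t) ∈ epi f }. -/
open Filter

/-- `𝒦`: the closure of the conic extension `{(x·s, s, t·s) | s > 0, (x, t) ∈ epi f}`
of the epigraph of `f`. -/
noncomputable def coneExt {n : ℕ} (f : EuclideanSpace ℝ (Fin n) → EReal) :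
    Set (EuclideanSpace ℝ (Fin n) × ℝ × ℝ) :=
  closure {p | ∃ s : ℝ, 0 < s ∧ ∃ x t, f x ≤ ((t : ℝ) : EReal) ∧ p = (s • x, s, t * s)}

/-- Renegar's function `λ(x,s,t) = inf { λ | (x,s,t) - λ·(0,1,0) ∉ 𝒦 }`. -/
noncomputable def renegarLambda {n : ℕ} (f : EuclideanSpace ℝ (Fin n) → EReal)
    (x : EuclideanSpace ℝ (Fin n)) (s t : ℝ) : ℝ :=
  sInf {l : ℝ | (x, s, t) - l • ((0 : EuclideanSpace ℝ (Fin n)), (1 : ℝ), (0 : ℝ)) ∉ coneExt f}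

/-!
For `γ > 0`, dehomogenizing `(x, γ, z) ↦ (x / γ, z / γ)` is continuous and maps the generators
of `𝒦` into the epigraph, which is closed by lower semicontinuity; hence the slice of `𝒦` at
`(x, ·, z)` meets `γ > 0` exactly in `{γ > 0 | f^p(x, γ) ≤ z}`, while `𝒦` lies in `s ≥ 0`.
Since `f 0 ≤ 0`, convexity makes `f^p(x, ·) ≤ z` persist as `γ` grows, and `f 0 < 0` with
`0 ∈ int dom f` makes it hold for some `γ`. So the complement of the slice has supremum `γ_z(x)`,
and `λ(x, 1, z) = inf {l | 1 - l ∉ slice} = 1 - γ_z(x)`.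
-/

section Epigraph

variable {E : Type*} [AddCommMonoid E] [Module ℝ E] {f : E → EReal}

lemma map_combo_le_of_convex_epigraph
    (hf : Convex ℝ {p : E × ℝ | f p.1 ≤ (p.2 : EReal)}) {y₁ y₂ : E} {t₁ t₂ a b : ℝ}
    (h₁ : f y₁ ≤ t₁) (h₂ : f y₂ ≤ t₂) (ha : 0 ≤ a) (hb : 0 ≤ b) (hab : a + b = 1) :
    f (a • y₁ + b • y₂) ≤ ((a * t₁ + b * t₂ : ℝ) : EReal) := by
  simpa using hf (x := (y₁, t₁)) (y := (y₂, t₂)) h₁ h₂ ha hb hab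

end Epigraph

open Topology

variable {n : ℕ} {f : EuclideanSpace ℝ (Fin n) → EReal} {x : EuclideanSpace ℝ (Fin n)}

lemma perspective_le_iff {γ z : ℝ} (hγ : 0 < γ) :
    perspective f x γ ≤ z ↔ f (γ⁻¹ • x) ≤ ((z / γ : ℝ) : EReal) := by
  rw [perspective, EReal.coe_div,
    EReal.le_div_iff_mul_le (by exact_mod_cast hγ) (EReal.coe_ne_top γ), mul_comm]

lemma mem_coneExt_iff (hf : LowerSemicontinuous f) {γ z : ℝ} (hγ : 0 < γ) :
    (x, γ, z) ∈ coneExt f ↔ perspective f x γ ≤ z := by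
  rw [perspective_le_iff hγ]
  constructor
  · intro h
    let dehomogenize (p : EuclideanSpace ℝ (Fin n) × ℝ × ℝ) := (p.2.1⁻¹ • p.1, p.2.2 / p.2.1)
    have hcont : ContinuousAt dehomogenize (x, γ, z) := by
      fun_prop (disch := exact hγ.ne')
    have hepi : IsClosed {q : EuclideanSpace ℝ (Fin n) × ℝ | f q.1 ≤ (q.2 : EReal)} :=
      hf.isClosed_epigraph.preimage
        (continuous_fst.prodMk (continuous_coe_real_ereal.comp continuous_snd))
    refine closure_minimal ?_ hepi (mem_closure_image hcont h)
    rintro _ ⟨_, ⟨s, hs, y, t, hyt, rfl⟩, rfl⟩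
    simpa [dehomogenize, smul_smul, inv_mul_cancel₀ hs.ne', hs.ne'] using hyt
  · intro h
    refine subset_closure ⟨γ, hγ, γ⁻¹ • x, z / γ, h, ?_⟩
    simp [smul_smul, mul_inv_cancel₀ hγ.ne', div_mul_cancel₀ _ hγ.ne']

lemma nonneg_of_mem_coneExt {s t : ℝ} (h : (x, s, t) ∈ coneExt f) : 0 ≤ s := by
  refine closure_minimal ?_ (isClosed_le continuous_const (continuous_fst.comp continuous_snd)) h
  rintro _ ⟨s, hs, y, t, -, rfl⟩
  exact hs.le

lemma perspective_le_of_le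
    (hconv : Convex ℝ {p : EuclideanSpace ℝ (Fin n) × ℝ | f p.1 ≤ (p.2 : EReal)})
    (h0 : f 0 ≤ 0) {γ γ' z : ℝ} (hγ : 0 < γ) (hγγ' : γ ≤ γ') (h : perspective f x γ ≤ z) :
    perspective f x γ' ≤ z := by
  have hγ' : 0 < γ' := hγ.trans_le hγγ'
  rw [perspective_le_iff hγ] at h
  rw [perspective_le_iff hγ']
  have key := map_combo_le_of_convex_epigraph hconv h (t₂ := 0) (by simpa using h0)
    (div_nonneg hγ.le hγ'.le) (sub_nonneg.2 ((div_le_one hγ').2 hγγ')) (add_sub_cancel _ _)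
  convert key using 3
  · rw [smul_zero, add_zero, smul_smul]; field_simp
  · rw [mul_zero, add_zero]; field_simp

lemma exists_perspective_le
    (hconv : Convex ℝ {p : EuclideanSpace ℝ (Fin n) × ℝ | f p.1 ≤ (p.2 : EReal)})
    (hdom : 0 ∈ interior {y | f y ≠ ⊤}) (h0 : f 0 < 0) (x : EuclideanSpace ℝ (Fin n)) (z : ℝ) :
    ∃ γ, 0 < γ ∧ perspective f x γ ≤ z := by
  obtain ⟨c, hfc, hc⟩ := EReal.exists_between_coe_real h0
  have hray : Tendsto (fun ε : ℝ => ε • x) (𝓝[>] 0) (𝓝 0) :=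
    ((by fun_prop : Continuous fun ε : ℝ => ε • x).tendsto' 0 0 (zero_smul ℝ x)).mono_left
      nhdsWithin_le_nhds
  obtain ⟨ε, hε, hεx⟩ :=
    (eventually_mem_nhdsWithin.and (hray.eventually (mem_interior_iff_mem_nhds.1 hdom))).exists
  obtain ⟨b, hb, -⟩ := EReal.exists_between_coe_real (lt_top_iff_ne_top.2 hεx)
  -- On the segment from `(0, c)` to `(ε • x, b)` the height `θ * b + (1 - θ) * c` tends to
  -- `c < 0` as `θ → 0⁺`, while the level `z / γ = θ * ε * z` needed at `γ = (θ * ε)⁻¹` tends to 0.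
  have hline : ∀ᶠ θ : ℝ in 𝓝[>] 0, θ ∈ Set.Ioc 0 1 ∧ θ * b + (1 - θ) * c - θ * ε * z < 0 := by
    have hcont : Tendsto (fun θ : ℝ => θ * b + (1 - θ) * c - θ * ε * z) (𝓝 0) (𝓝 c) := by
      simpa using ((by fun_prop : Continuous fun θ : ℝ => θ * b + (1 - θ) * c - θ * ε * z)
        |>.tendsto 0)
    exact Filter.Eventually.and (Ioc_mem_nhdsGT one_pos)
      (nhdsWithin_le_nhds (hcont.eventually_lt_const (by exact_mod_cast hc)))
  obtain ⟨θ, ⟨hθ, hθ1⟩, hθline⟩ := hline.exists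
  have hθε : 0 < θ * ε := mul_pos hθ hε
  refine ⟨(θ * ε)⁻¹, inv_pos.2 hθε, (perspective_le_iff (inv_pos.2 hθε)).2 ?_⟩
  have key := map_combo_le_of_convex_epigraph hconv hb.le hfc.le hθ.le (sub_nonneg.2 hθ1)
    (add_sub_cancel _ _)
  rw [smul_zero, add_zero, smul_smul] at key
  rw [inv_inv, div_inv_eq_mul]
  exact key.trans (by exact_mod_cast (by linarith : θ * b + (1 - θ) * c ≤ z * (θ * ε)))

lemma IsLUB.isGLB_sub_left {s : Set ℝ} {a : ℝ} (h : IsLUB s a) (c : ℝ) :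
    IsGLB {l | c - l ∈ s} (c - a) := by
  refine ⟨fun l hl => ?_, fun b hb => ?_⟩
  · linarith [h.1 hl]
  · linarith [h.2 fun γ hγ => le_sub_comm.1 (hb (show c - (c - γ) ∈ s by simpa using hγ))]

lemma isLUB_radial (hf : GoodFun f) (x : EuclideanSpace ℝ (Fin n)) (z : ℝ) :
    IsLUB {γ | (x, γ, z) ∉ coneExt f} (radial f z x) := by
  set S : Set ℝ := {γ | 0 < γ ∧ perspective f x γ ≤ z}
  have hne : S.Nonempty := exists_perspective_le hf.convexEpi hf.zero_mem hf.neg_at_zero x z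
  have hbdd : BddBelow S := ⟨0, fun γ hγ => hγ.1.le⟩
  change IsLUB _ (sInf S)
  refine ⟨fun γ hγ => ?_, fun b hb => ?_⟩
  · by_contra! hlt
    obtain ⟨γ', ⟨hγ', hγ'z⟩, hγ'γ⟩ := exists_lt_of_csInf_lt hne hlt
    exact hγ ((mem_coneExt_iff hf.lsc (hγ'.trans hγ'γ)).2
      (perspective_le_of_le hf.convexEpi hf.neg_at_zero.le hγ' hγ'γ.le hγ'z))
  · by_contra! hbr
    rcases lt_or_ge b 0 with hb0 | hb0
    · have := hb (show b / 2 ∈ _ from fun h => by linarith [nonneg_of_mem_coneExt h])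
      linarith
    · have hγ : 0 < (b + sInf S) / 2 := by linarith
      have := hb (show (b + sInf S) / 2 ∈ _ from fun h =>
        notMem_of_lt_csInf (by linarith) hbdd ⟨hγ, (mem_coneExt_iff hf.lsc hγ).1 h⟩)
      linarith

/-- **Lemma 2.1.** For any `x ∈ ℝⁿ` and `z ∈ ℝ`, `γ_z(x) = 1 - λ(x, 1, z)`. -/
theorem radial_eq_one_sub_lambda {n : ℕ}
    (f : EuclideanSpace ℝ (Fin n) → EReal) (hf : GoodFun f)
    (x : EuclideanSpace ℝ (Fin n)) (z : ℝ) :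
    radial f z x = 1 - renegarLambda f x 1 z := by
  have hshift : ∀ l : ℝ, (x, (1 : ℝ), z) - l • ((0 : EuclideanSpace ℝ (Fin n)), (1 : ℝ), (0 : ℝ))
      = (x, 1 - l, z) := fun l => by simp
  have hglb : IsGLB {l : ℝ | (x, 1 - l, z) ∉ coneExt f} (1 - radial f z x) :=
    (isLUB_radial hf x z).isGLB_sub_left 1
  have hne : {l : ℝ | (x, 1 - l, z) ∉ coneExt f}.Nonempty :=
    ⟨2, fun h => by linarith [nonneg_of_mem_coneExt h]⟩
  rw [renegarLambda]
  simp_rw [hshift]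
  rw [hglb.csInf_eq hne]
  ring
end
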